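/- (Holroyd–Ruskey–Williams) Let n ≥ 4. If S is a Hamilton sequence for the restricted rotator graph RR_{n−1}({n−2,n−1}), then recycle_n(S) is a Hamilton sequence for the restricted rotator graph RR_n({n−1,n}). -/

import Mathlib

open Equiv

/-- The prefix-rotation `σ_r = (1 2 ⋯ r)` of positions, 0-indexed as a
permutation of `Fin n` (it sends position `i` to `i+1` for `i < r-1`,
sends position `r-1` to `0`, and fixes all positions `≥ r`). -/
def sigmaRot (n r : ℕ) : Equiv.Perm (Fin n) :=
  if h : r - 1 < n then Fin.cycleRange ⟨r - 1, h⟩ else 1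

/-- The permutation `σ_{r₁}σ_{r₂}⋯σ_{r_i}` (composed left-to-right) given by the
first `i` entries of the sequence `S`. -/
def partialProd (n : ℕ) (S : List ℕ) (i : ℕ) : Equiv.Perm (Fin n) :=
  ((S.take i).map (sigmaRot n)).prod

/-- `S` is a Hamilton sequence for the restricted rotator graph `RR_n(R)`. -/
def IsHamiltonSeq (n : ℕ) (R : Set ℕ) (S : List ℕ) : Prop :=
  S.length = Nat.factorial n ∧
  (∀ r ∈ S, r ∈ R) ∧
  (∀ i < Nat.factorial n, ∀ j < Nat.factorial n,
      partialProd n S i = partialProd n S j → i = j) ∧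
  partialProd n S S.length = 1

/-- The value (0-indexed symbol) at the last position of the string `a`;
the one-line-notation symbol there is `lastVal a + 1`. -/
def lastVal {n : ℕ} (a : Equiv.Perm (Fin n)) : ℕ :=
  if h : 0 < n then ((a ⟨n - 1, Nat.sub_lt h Nat.one_pos⟩ : Fin n) : ℕ) else 0

/-- Arc relation of the restricted incomplete rotator graph `RIR_n(R,m)`:
both endpoints have last symbol `≤ m` and `b = a·σ_r` for some `r ∈ R`. -/
def RIRAdj (n m : ℕ) (R : Set ℕ) (a b : Equiv.Perm (Fin n)) : Prop :=
  lastVal a < m ∧ lastVal b < m ∧ ∃ r ∈ R, b = a * sigmaRot n r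

/-- `RIR_n(R,m)` is strongly connected. -/
def StronglyConnectedRIR (n m : ℕ) (R : Set ℕ) : Prop :=
  ∀ a b : Equiv.Perm (Fin n), lastVal a < m → lastVal b < m →
    Relation.ReflTransGen (RIRAdj n m R) a b

/-- The reuse operation: replace each entry `r` by `n,…,n,n+1-r` (`n-1` copies of `n`). -/
def reuseOp (n : ℕ) (S : List ℕ) : List ℕ :=
  (S.map (fun r => List.replicate (n - 1) n ++ [n + 1 - r])).flatten

/-- Corbett's reuse sequences: `C₁ = (1)` and `C_k = reuse_k(C_{k-1})`. -/
def corbettC : ℕ → List ℕ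
  | 0 => []
  | 1 => [1]
  | k + 2 => reuseOp (k + 2) (corbettC (k + 1))

/-- The recycle operation: replace each entry `r` by
`n, n, n-1, …, n-1, n, …, n` (`r-1` copies of `n-1`, then `n-r-1` copies of `n`). -/
def recycleOp (n : ℕ) (S : List ℕ) : List ℕ :=
  (S.map (fun r => n :: n :: (List.replicate (r - 1) (n - 1) ++ List.replicate (n - r - 1) n))).flatten

/-- The canonical recycle sequences: `D₁ = (1)` and `D_k = recycle_k(D_{k-1})`. -/
def recycleD : ℕ → List ℕ
  | 0 => []
  | 1 => [1]
  | k + 2 => recycleOp (k + 2) (recycleD (k + 1))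

/-- The rewind operation `rewind_m(S)` (with `S = T, n-1, n-1`):
`(T,n-1,n)`, then `m-2` copies of `(T,n)`, then `(T,n-1,n)`, then `m-2` copies of `n`. -/
def rewindOp (n m : ℕ) (S : List ℕ) : List ℕ :=
  (S.dropLast.dropLast ++ [n - 1, n])
    ++ (List.replicate (m - 2) (S.dropLast.dropLast ++ [n])).flatten
    ++ (S.dropLast.dropLast ++ [n - 1, n])
    ++ List.replicate (m - 2) n

/-- The canonical rewind sequences: `W₂ = (2,2)` and `W_k = rewind_k(W_{k-1})`. -/
def rewindW : ℕ → List ℕ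
  | 0 => []
  | 1 => []
  | 2 => [2, 2]
  | k + 3 => rewindOp (k + 3) (k + 3) (rewindW (k + 2))

/-- `S` is a Hamilton sequence for the restricted incomplete rotator graph `RIR_n(R,m)`,
starting from the string `n n-1 ⋯ 1` (which is `Fin.revPerm`). -/
def IsHamiltonSeqRIR (n m : ℕ) (R : Set ℕ) (S : List ℕ) : Prop :=
  S.length = m * Nat.factorial (n - 1) ∧
  (∀ r ∈ S, r ∈ R) ∧
  (∀ i < S.length, ∀ j < S.length,
      Fin.revPerm * partialProd n S i = Fin.revPerm * partialProd n S j → i = j) ∧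
  {b : Equiv.Perm (Fin n) | ∃ i < S.length, b = Fin.revPerm * partialProd n S i}
    = {b : Equiv.Perm (Fin n) | lastVal b < m} ∧
  Fin.revPerm * partialProd n S S.length = Fin.revPerm

/-- The cyclic shift `shift²` moving the first two entries to the end. -/
def shift2 (S : List ℕ) : List ℕ := S.drop 2 ++ S.take 2

/-! Write `n = m + 1` and let `permSucc m : Perm (Fin m) →* Perm (Fin (m + 1))` act on the
positions `1, …, m`, fixing position `0`. The block `n, n, (n-1)^(r-1), n^(n-r-1)` that replaces
an entry `r` multiplies out to `permSucc m σ_r`, so after `q` complete blocks the partial product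
of `recycle_n(S)` is the image of the `q`-th partial product of `S`, and the total product is `1`.
For `r ∈ {n-2, n-1}` the first `t < n` letters of a block do not depend on `r`; their product
`Q_t` sends a position depending only on `t` to `0`, which every `permSucc m p` fixes. Hence
`permSucc m p * Q_t` determines `t`, then `p`, and the `n!` partial products are distinct. -/
lemma sigmaRot_val {n r : ℕ} (hr : r ≤ n) (x : Fin n) :
    (sigmaRot n r x : ℕ) =
      if (x : ℕ) < r then (if (x : ℕ) + 1 < r then (x : ℕ) + 1 else 0) else x := by
  have h : r - 1 < n := by have := x.isLt; omega
  rw [sigmaRot, dif_pos h]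
  rcases le_or_gt x ⟨r - 1, h⟩ with hx | hx
  · rw [Fin.coe_cycleRange_of_le hx]
    simp only [Fin.ext_iff, Fin.le_def] at hx ⊢
    split_ifs <;> omega
  · rw [Fin.cycleRange_of_gt hx]
    simp only [Fin.lt_def] at hx
    split_ifs <;> omega

lemma sigmaRot_pow_val {n r j : ℕ} (hr : r ≤ n) (hj : j ≤ r) (x : Fin n) :
    ((sigmaRot n r ^ j) x : ℕ) =
      if (x : ℕ) < r then (if (x : ℕ) + j < r then (x : ℕ) + j else (x : ℕ) + j - r)
      else x := by
  induction j with
  | zero => split_ifs <;> simp; omega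
  | succ j ih =>
    rw [pow_succ', Perm.mul_apply, sigmaRot_val hr, ih (by omega)]
    split_ifs <;> omega

lemma List.take_flatten_of_length_eq {α : Type*} {L : List (List α)} {N q t : ℕ}
    (hL : ∀ l ∈ L, l.length = N) (hq : q < L.length) (ht : t ≤ N) :
    L.flatten.take (N * q + t) = (L.take q).flatten ++ L[q].take t := by
  induction L generalizing q with
  | nil => simp at hq
  | cons l L ih =>
    have hl := hL l List.mem_cons_self
    cases q with
    | zero => simpa using List.take_append_of_le_length (l₂ := L.flatten) (by omega)
    | succ q =>
      rw [List.flatten_cons, show N * (q + 1) + t = l.length + (N * q + t) by rw [hl]; ring,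
        List.take_length_add_append, ih (fun l hl' => hL l (List.mem_cons_of_mem _ hl'))]
      · simp
      · simpa using hq

noncomputable def permSucc (m : ℕ) : Perm (Fin m) →* Perm (Fin (m + 1)) :=
  Perm.viaEmbeddingHom (Fin.succEmb m)

lemma permSucc_apply_succ {m : ℕ} (p : Perm (Fin m)) (y : Fin m) :
    permSucc m p y.succ = (p y).succ :=
  p.viaEmbedding_apply (Fin.succEmb m) y

lemma permSucc_apply_zero {m : ℕ} (p : Perm (Fin m)) : permSucc m p 0 = 0 :=
  p.viaEmbedding_apply_of_notMem _ 0 (by rintro ⟨y, hy⟩; exact Fin.succ_ne_zero y hy)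

lemma permSucc_injective (m : ℕ) : Function.Injective (permSucc m) :=
  Perm.viaEmbeddingHom_injective _

def recycleBlock (n r : ℕ) : List ℕ :=
  n :: n :: (List.replicate (r - 1) (n - 1) ++ List.replicate (n - r - 1) n)

lemma recycleOp_eq_flatten (n : ℕ) (S : List ℕ) :
    recycleOp n S = (S.map (recycleBlock n)).flatten := rfl

lemma length_recycleBlock {n r : ℕ} (h1 : 1 ≤ r) (h2 : r < n) :
    (recycleBlock n r).length = n := by
  simp only [recycleBlock, List.length_cons, List.length_append, List.length_replicate]
  omega

lemma length_recycleOp {n : ℕ} {S : List ℕ} (hS : ∀ r ∈ S, 1 ≤ r ∧ r < n) :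
    (recycleOp n S).length = n * S.length := by
  have hblock : S.map (List.length ∘ recycleBlock n) = S.map fun _ => n :=
    List.map_congr_left fun r hr => length_recycleBlock (hS r hr).1 (hS r hr).2
  rw [recycleOp_eq_flatten, List.length_flatten, List.map_map, hblock, List.map_const',
    List.sum_replicate, smul_eq_mul, mul_comm]

lemma mem_recycleOp {n a : ℕ} {S : List ℕ} (ha : a ∈ recycleOp n S) :
    a = n - 1 ∨ a = n := by
  simp only [recycleOp, List.mem_flatten, List.mem_map] at ha
  obtain ⟨_, ⟨r, -, rfl⟩, ha⟩ := ha
  simp only [List.mem_cons, List.mem_append, List.mem_replicate] at ha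
  omega

lemma prod_map_sigmaRot_recycleBlock {m r : ℕ} (h1 : 1 ≤ r) (h2 : r ≤ m) :
    ((recycleBlock (m + 1) r).map (sigmaRot (m + 1))).prod = permSucc m (sigmaRot m r) := by
  ext x
  simp only [recycleBlock, Nat.add_sub_cancel, List.map_cons, List.map_append, List.map_replicate,
    List.prod_cons, List.prod_append, List.prod_replicate, Perm.mul_apply]
  have hA := sigmaRot_pow_val le_rfl (j := m + 1 - r - 1) (by omega) x
  generalize (sigmaRot (m + 1) (m + 1) ^ (m + 1 - r - 1)) x = A at hA ⊢
  have hB := sigmaRot_pow_val (n := m + 1) (r := m) (j := r - 1) (by omega) (by omega) A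
  generalize (sigmaRot (m + 1) m ^ (r - 1)) A = B at hB ⊢
  have hC := sigmaRot_val le_rfl B
  generalize sigmaRot (m + 1) (m + 1) B = C at hC ⊢
  rw [sigmaRot_val le_rfl]
  have := x.isLt
  rcases Fin.eq_zero_or_eq_succ x with hx | ⟨y, hx⟩
  · have hx0 : (x : ℕ) = 0 := by simp [hx]
    rw [hx, permSucc_apply_zero, Fin.val_zero]
    split_ifs at hA hB hC ⊢ <;> omega
  · have hxy : (x : ℕ) = y + 1 := by simp [hx]
    rw [hx, permSucc_apply_succ, Fin.val_succ, sigmaRot_val h2]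
    split_ifs at hA hB hC ⊢ <;> omega

lemma prod_map_sigmaRot_recycleOp {m : ℕ} {S : List ℕ} (hS : ∀ r ∈ S, 1 ≤ r ∧ r ≤ m) :
    ((recycleOp (m + 1) S).map (sigmaRot (m + 1))).prod =
      permSucc m ((S.map (sigmaRot m)).prod) := by
  rw [recycleOp_eq_flatten, List.map_flatten, List.prod_flatten, List.map_map, List.map_map,
    map_list_prod, List.map_map]
  exact congrArg List.prod <|
    List.map_congr_left fun r hr => prod_map_sigmaRot_recycleBlock (hS r hr).1 (hS r hr).2

lemma take_recycleBlock {m r t : ℕ} (ht : t ≤ r + 1) :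
    (recycleBlock (m + 1) r).take t =
      List.replicate (min t 2) (m + 1) ++ List.replicate (t - 2) m := by
  rcases t with _ | _ | s
  · rfl
  · rfl
  · simp only [recycleBlock, List.take_succ_cons, Nat.add_sub_cancel, List.take_append,
      List.take_replicate, List.length_replicate]
    rw [Nat.min_eq_left (by omega), show s - (r - 1) = 0 by omega]
    simp

/-- The product of the first `t` letters of `recycleBlock (m + 1) r` when `t ≤ r + 1`
(`take_recycleBlock`). -/
def recyclePrefixPerm (m t : ℕ) : Perm (Fin (m + 1)) :=
  sigmaRot (m + 1) (m + 1) ^ min t 2 * sigmaRot (m + 1) m ^ (t - 2)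

lemma recyclePrefixPerm_inv_zero_val {m t : ℕ} (ht : t ≤ m) :
    (((recyclePrefixPerm m t)⁻¹ 0 : Fin (m + 1)) : ℕ) = if t = 0 then 0 else m + 1 - t := by
  have hx : recyclePrefixPerm m t ((recyclePrefixPerm m t)⁻¹ 0) = 0 := Perm.eq_inv_iff_eq.mp rfl
  generalize (recyclePrefixPerm m t)⁻¹ 0 = x at hx ⊢
  rw [recyclePrefixPerm, Perm.mul_apply, Fin.ext_iff, Fin.val_zero] at hx
  have hA := sigmaRot_pow_val (n := m + 1) (r := m) (j := t - 2) (by omega) (by omega) x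
  generalize (sigmaRot (m + 1) m ^ (t - 2)) x = A at hA hx
  rw [sigmaRot_pow_val le_rfl (by omega)] at hx
  split_ifs at hA hx ⊢ <;> omega

lemma permSucc_mul_recyclePrefixPerm_inj {m t t' : ℕ} {p p' : Perm (Fin m)} (ht : t ≤ m)
    (ht' : t' ≤ m)
    (h : permSucc m p * recyclePrefixPerm m t = permSucc m p' * recyclePrefixPerm m t') :
    p = p' ∧ t = t' := by
  have inv_zero : ∀ (q : Perm (Fin m)) s, (permSucc m q * recyclePrefixPerm m s)⁻¹ 0 =
      (recyclePrefixPerm m s)⁻¹ 0 := fun q s => by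
    rw [mul_inv_rev, Perm.mul_apply, ← map_inv, permSucc_apply_zero]
  have hmarker := congrArg (fun g => ((g⁻¹ 0 : Fin (m + 1)) : ℕ)) h
  simp only [inv_zero, recyclePrefixPerm_inv_zero_val ht, recyclePrefixPerm_inv_zero_val ht']
    at hmarker
  obtain rfl : t = t' := by split_ifs at hmarker <;> omega
  exact ⟨permSucc_injective m (mul_right_cancel h), rfl⟩

lemma partialProd_recycleOp {m q t : ℕ} {S : List ℕ} (hS : ∀ r ∈ S, 1 ≤ r ∧ r ≤ m)
    (hq : q < S.length) (ht : t ≤ S[q] + 1) :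
    partialProd (m + 1) (recycleOp (m + 1) S) ((m + 1) * q + t) =
      permSucc m (partialProd m S q) * recyclePrefixPerm m t := by
  have hlen : ∀ l ∈ S.map (recycleBlock (m + 1)), l.length = m + 1 := by
    simp only [List.mem_map]
    rintro _ ⟨r, hr, rfl⟩
    exact length_recycleBlock (hS r hr).1 (by have := hS r hr; omega)
  have hSq := hS _ (List.getElem_mem hq)
  rw [partialProd, recycleOp_eq_flatten,
    List.take_flatten_of_length_eq hlen (by simpa using hq) (by omega), List.map_append,
    List.prod_append, ← List.map_take, ← recycleOp_eq_flatten,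
    prod_map_sigmaRot_recycleOp fun r hr => hS r (List.mem_of_mem_take hr), List.getElem_map,
    take_recycleBlock ht]
  simp [partialProd, recyclePrefixPerm, List.prod_replicate]

lemma partialProd_recycleOp_injective {m : ℕ} {S : List ℕ} (hm : 2 ≤ m)
    (hS : ∀ r ∈ S, m - 1 ≤ r ∧ r ≤ m)
    (hinj : ∀ i < S.length, ∀ j < S.length, partialProd m S i = partialProd m S j → i = j) :
    ∀ i < (m + 1) * S.length, ∀ j < (m + 1) * S.length,
      partialProd (m + 1) (recycleOp (m + 1) S) i = partialProd (m + 1) (recycleOp (m + 1) S) j →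
        i = j := by
  have decomp : ∀ i < (m + 1) * S.length,
      partialProd (m + 1) (recycleOp (m + 1) S) i =
        permSucc m (partialProd m S (i / (m + 1))) * recyclePrefixPerm m (i % (m + 1)) := by
    intro i hi
    have hq : i / (m + 1) < S.length := Nat.div_lt_of_lt_mul hi
    have hSq := hS _ (List.getElem_mem hq)
    have hmod : i % (m + 1) < m + 1 := Nat.mod_lt i (by omega)
    conv_lhs => rw [← Nat.div_add_mod i (m + 1)]
    exact partialProd_recycleOp (fun r hr => ⟨by have := hS r hr; omega, (hS r hr).2⟩) hq
      (by omega)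
  intro i hi j hj h
  rw [decomp i hi, decomp j hj] at h
  obtain ⟨hp, ht⟩ := permSucc_mul_recyclePrefixPerm_inj
    (Nat.le_of_lt_succ (Nat.mod_lt i m.succ_pos)) (Nat.le_of_lt_succ (Nat.mod_lt j m.succ_pos)) h
  have hq := hinj _ (Nat.div_lt_of_lt_mul hi) _ (Nat.div_lt_of_lt_mul hj) hp
  rw [← Nat.div_add_mod i (m + 1), ← Nat.div_add_mod j (m + 1), hq, ht]

/-- Holroyd–Ruskey–Williams. Let `n ≥ 4`. If `S` is a Hamilton sequence
for `RR_{n-1}({n-2,n-1})`, then `recycle_n(S)` is a Hamilton sequence for `RR_n({n-1,n})`. -/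
theorem stmt19 (n : ℕ) (hn : 4 ≤ n) (S : List ℕ)
    (hS : IsHamiltonSeq (n - 1) {n - 2, n - 1} S) :
    IsHamiltonSeq n {n - 1, n} (recycleOp n S) := by
  obtain ⟨m, rfl⟩ : ∃ m, n = m + 1 := ⟨n - 1, by omega⟩
  obtain ⟨hlen, hmem, hinj, hprod⟩ : IsHamiltonSeq m {m - 1, m} S := hS
  have hrange : ∀ r ∈ S, m - 1 ≤ r ∧ r ≤ m := fun r hr => by
    have h := hmem r hr
    simp only [Set.mem_insert_iff, Set.mem_singleton_iff] at h
    omega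
  have hpos : ∀ r ∈ S, 1 ≤ r ∧ r ≤ m := fun r hr =>
    ⟨by have := hrange r hr; omega, (hrange r hr).2⟩
  have hlen' : (recycleOp (m + 1) S).length = (m + 1) * S.length :=
    length_recycleOp fun r hr => ⟨(hpos r hr).1, Nat.lt_succ_of_le (hpos r hr).2⟩
  rw [← hlen] at hinj
  refine ⟨by rw [hlen', hlen, Nat.factorial_succ], fun a ha => ?_, ?_, ?_⟩
  · rcases mem_recycleOp ha with rfl | rfl <;> simp
  · rw [Nat.factorial_succ, ← hlen]
    exact partialProd_recycleOp_injective (by omega) hrange hinj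
  · rw [partialProd, List.take_length] at hprod ⊢
    rw [prod_map_sigmaRot_recycleOp hpos, hprod, map_one]
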